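/- arXiv:2402.05527 — 4 statements merged into one kernel-verified Lean document; each statement's English description precedes it below -/
import Mathlib

section
/- Let (x, z, θ) : I → R³ be a solution of the grim reaper system x' = z cos θ, z' = z sin θ, θ' = 2 cos θ (1 - z)/z with z > 0 on I. Then the function s ↦ cos(θ(s)) / (z(s)² e^{2/z(s)}) is constant on I; equivalently, there is c ∈ R with cos θ(s) = c z(s)² e^{2/z(s)} for all s ∈ I. -/
/-!
Along a solution, the θ'- and z'-contributions to the derivative of `cos θ / (z² e^{2/z})`
cancel: formally, its logarithmic derivative is
`-tan θ · θ' - (2 - 2/z) z'/z = -2 sin θ (1 - z)/z - 2 sin θ (z - 1)/z = 0`,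
so the quotient has zero derivative on the convex set `I` and is therefore constant there.
-/

open Real

noncomputable def grimReaperFirstIntegral (z θ : ℝ) : ℝ :=
  cos θ / (z ^ 2 * exp (2 / z))

theorem Convex.eq_of_hasDerivWithinAt_eq_zero {E : Type*} [NormedAddCommGroup E] [NormedSpace ℝ E]
    {f : ℝ → E} {s : Set ℝ} (hs : Convex ℝ s) (hf : ∀ x ∈ s, HasDerivWithinAt f 0 s x)
    {x y : ℝ} (hx : x ∈ s) (hy : y ∈ s) : f y = f x := by
  have h := hs.norm_image_sub_le_of_norm_hasDerivWithin_le (C := 0) hf (fun _ _ ↦ by simp) hx hy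
  rw [zero_mul, norm_le_zero_iff, sub_eq_zero] at h
  exact h

theorem hasDerivAt_grimReaperFirstIntegral {z θ : ℝ → ℝ} {s : ℝ} (hz : 0 < z s)
    (hz' : HasDerivAt z (z s * sin (θ s)) s)
    (hθ' : HasDerivAt θ (2 * cos (θ s) * (1 - z s) / z s) s) :
    HasDerivAt (fun s ↦ grimReaperFirstIntegral (z s) (θ s)) 0 s := by
  have hden := (hz'.pow 2).mul ((hasDerivAt_const s 2).div hz' hz.ne').exp
  have hne : z s ^ 2 * exp (2 / z s) ≠ 0 := by positivity
  refine (hθ'.cos.div hden hne).congr_deriv ?_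
  simp only [Pi.mul_apply, Pi.pow_apply, Pi.div_apply]
  field_simp
  ring

theorem grimReaper_first_integral_general (I : Set ℝ) (hI : Convex ℝ I)
    (z θ : ℝ → ℝ)
    (hz : ∀ s ∈ I, 0 < z s)
    (hz' : ∀ s ∈ I, HasDerivAt z (z s * Real.sin (θ s)) s)
    (hθ' : ∀ s ∈ I, HasDerivAt θ (2 * Real.cos (θ s) * (1 - z s) / z s) s) :
    ∃ c : ℝ, ∀ s ∈ I,
      Real.cos (θ s) = c * (z s) ^ 2 * Real.exp (2 / z s) := by
  rcases I.eq_empty_or_nonempty with rfl | ⟨s₀, hs₀⟩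
  · exact ⟨0, by simp⟩
  refine ⟨grimReaperFirstIntegral (z s₀) (θ s₀), fun s hs ↦ ?_⟩
  have hconst := hI.eq_of_hasDerivWithinAt_eq_zero (fun t ht ↦
    (hasDerivAt_grimReaperFirstIntegral (hz t ht) (hz' t ht) (hθ' t ht)).hasDerivWithinAt) hs₀ hs
  have hpos : 0 < z s ^ 2 * exp (2 / z s) := by have := hz s hs; positivity
  rw [← hconst, grimReaperFirstIntegral, mul_assoc, div_mul_cancel₀ _ hpos.ne']

/-- First integral of the grim reaper system: along any solution of
`x' = z cos θ`, `z' = z sin θ`, `θ' = 2 cos θ (1-z)/z` with `z > 0` on an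
interval `I`, there is a constant `c` with `cos θ = c z² e^{2/z}`. -/
theorem grimReaper_first_integral (I : Set ℝ) (hI : Convex ℝ I)
    (x z θ : ℝ → ℝ)
    (hz : ∀ s ∈ I, 0 < z s)
    (hx' : ∀ s ∈ I, HasDerivAt x (z s * Real.cos (θ s)) s)
    (hz' : ∀ s ∈ I, HasDerivAt z (z s * Real.sin (θ s)) s)
    (hθ' : ∀ s ∈ I, HasDerivAt θ (2 * Real.cos (θ s) * (1 - z s) / z s) s) :
    ∃ c : ℝ, ∀ s ∈ I,
      Real.cos (θ s) = c * (z s) ^ 2 * Real.exp (2 / z s) :=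
  grimReaper_first_integral_general I hI z θ hz hz' hθ'
end

section
/- Let z : [0, R) → (0, ∞) be a C² solution of z''/(1 + z'²) + z'/r = 2(1 - z)/z² on (0, R) with z(0) = z₀ > 0, z'(0) = 0. Then for all r ∈ (0, R): (1/2) log(1 + z'(r)²) + ∫₀^r z'(t)²/t dt = -2(1/z(r) + log z(r)) + 2(1/z₀ + log z₀). -/
/-! Along a solution the energy `E = ½ log (1 + z'²) + 2 (1/z + log z)` satisfies `E' = -z'²/r`
(this is the ODE multiplied by `z'`), so the identity is the fundamental theorem of calculus for
`E` on `[0, r]`. The only delicate point is continuity of `E` at `0`: `z` is `C²` only on `[0, R)`,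
so `deriv z 0` need not be its one-sided derivative there. That one-sided derivative is forced to
vanish by integrability of `z'²/t`, since a nonzero limit of `z'²` at `0⁺` would make `z'²/t`
comparable to `1/t = log'`. -/

open Real Set Filter Topology MeasureTheory Asymptotics

theorem eq_zero_of_tendsto_of_intervalIntegrable_div {g : ℝ → ℝ} {L r : ℝ} (hr : 0 < r)
    (hg : Tendsto g (𝓝[>] 0) (𝓝 L))
    (hint : IntervalIntegrable (fun t => g t / t) volume 0 r) : L = 0 := by
  by_contra hL
  have hg_bound : (fun _ => (1 : ℝ)) =O[𝓝[>] 0] g :=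
    (isBigO_const_left_iff_pos_le_norm one_ne_zero).2
      ⟨‖L‖ / 2, by positivity, hg.norm.eventually (eventually_ge_nhds (by simpa))⟩
  refine not_intervalIntegrable_of_tendsto_norm_atTop_of_deriv_isBigO_filter (𝓝[>] 0)
    (by simpa [uIcc_of_le hr.le] using Icc_mem_nhdsGT hr)
    (eventually_mem_nhdsWithin.mono fun t ht => differentiableAt_log (ne_of_gt ht))
    (tendsto_abs_atBot_atTop.comp tendsto_log_nhdsGT_zero) ?_ hint
  simpa [deriv_log', div_eq_mul_inv] using hg_bound.mul (isBigO_refl (fun t : ℝ => t⁻¹) _)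

theorem tendsto_deriv_nhdsGT_of_contDiffOn_Ico {f : ℝ → ℝ} {a b : ℝ} (hab : a < b)
    (hf : ContDiffOn ℝ 1 f (Ico a b)) :
    Tendsto (deriv f) (𝓝[>] a) (𝓝 (derivWithin f (Ico a b) a)) := by
  have hcont := hf.continuousOn_derivWithin (uniqueDiffOn_Ico a b) le_rfl a ⟨le_rfl, hab⟩
  rw [← nhdsWithin_Ioo_eq_nhdsGT hab]
  refine (hcont.mono_left (nhdsWithin_mono _ Ioo_subset_Ico_self)).congr' ?_
  filter_upwards [self_mem_nhdsWithin] with t ht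
  exact derivWithin_of_mem_nhds (mem_of_superset (isOpen_Ioo.mem_nhds ht) Ioo_subset_Ico_self)

theorem continuousOn_deriv_Icc_of_contDiffOn_Ico {f : ℝ → ℝ} {a b c : ℝ}
    (hf : ContDiffOn ℝ 1 f (Ico a b)) (hcb : c < b)
    (ha : deriv f a = derivWithin f (Ico a b) a) : ContinuousOn (deriv f) (Icc a c) := by
  have hsub : Icc a c ⊆ Ico a b := Icc_subset_Ico_right hcb
  refine ((hf.continuousOn_derivWithin (uniqueDiffOn_Ico a b) le_rfl).mono hsub).congr ?_
  rintro t ⟨hat, htc⟩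
  rcases hat.eq_or_lt with rfl | hat
  · exact ha
  · exact (derivWithin_of_mem_nhds (Ico_mem_nhds hat (htc.trans_lt hcb))).symm

noncomputable def horoShrinkerEnergy (z : ℝ → ℝ) (t : ℝ) : ℝ :=
  (1 / 2) * log (1 + deriv z t ^ 2) + 2 * (1 / z t + log (z t))

theorem continuousOn_horoShrinkerEnergy {z : ℝ → ℝ} {s : Set ℝ} (hz : ContinuousOn z s)
    (hz' : ContinuousOn (deriv z) s) (hpos : ∀ t ∈ s, 0 < z t) :
    ContinuousOn (horoShrinkerEnergy z) s := by
  have hne : ∀ t ∈ s, z t ≠ 0 := fun t ht => (hpos t ht).ne'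
  have hne' : ∀ t ∈ s, 1 + deriv z t ^ 2 ≠ 0 := fun t _ => by positivity
  unfold horoShrinkerEnergy
  fun_prop (disch := assumption)

theorem hasDerivAt_horoShrinkerEnergy {z : ℝ → ℝ} {t : ℝ} (hz : DifferentiableAt ℝ z t)
    (hz' : DifferentiableAt ℝ (deriv z) t) (hpos : 0 < z t)
    (hode : deriv (deriv z) t / (1 + deriv z t ^ 2) + deriv z t / t
      = 2 * (1 - z t) / z t ^ 2) :
    HasDerivAt (horoShrinkerEnergy z) (-(deriv z t ^ 2 / t)) t := by
  have h1 : 1 + deriv z t ^ 2 ≠ 0 := by positivity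
  have hz'' : deriv (deriv z) t
      = (2 * (1 - z t) / z t ^ 2 - deriv z t / t) * (1 + deriv z t ^ 2) :=
    (div_eq_iff h1).1 (eq_sub_of_add_eq hode)
  have hE := ((((hz'.hasDerivAt.pow 2).const_add 1).log h1).const_mul (1 / 2)).add
    (((hasDerivAt_const t (1 : ℝ)).div hz.hasDerivAt hpos.ne').add
      (hz.hasDerivAt.log hpos.ne') |>.const_mul 2)
  refine (hE : HasDerivAt (horoShrinkerEnergy z) _ t).congr_deriv ?_
  simp only [Pi.pow_apply, hz'', show deriv z t ^ 2 / t = deriv z t * (deriv z t / t) by ring]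
  generalize deriv z t / t = q
  field_simp
  ring

theorem sphericalRotational_energy_identity_general (R z₀ : ℝ) (z : ℝ → ℝ)
    (hreg : ContDiffOn ℝ 2 z (Set.Ico 0 R))
    (hpos : ∀ r ∈ Set.Ico (0 : ℝ) R, 0 < z r)
    (hinit : z 0 = z₀) (hinit' : deriv z 0 = 0)
    (hode : ∀ r ∈ Set.Ioo (0 : ℝ) R,
      deriv (deriv z) r / (1 + (deriv z r) ^ 2) + deriv z r / r
        = 2 * (1 - z r) / (z r) ^ 2)
    (hint : ∀ r ∈ Set.Ioo (0 : ℝ) R,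
      IntervalIntegrable (fun t => (deriv z t) ^ 2 / t) MeasureTheory.volume 0 r) :
    ∀ r ∈ Set.Ioo (0 : ℝ) R,
      (1 / 2) * Real.log (1 + (deriv z r) ^ 2)
        + ∫ t in (0 : ℝ)..r, (deriv z t) ^ 2 / t
      = -2 * (1 / z r + Real.log (z r)) + 2 * (1 / z₀ + Real.log z₀) := by
  intro r hr
  have hz1 : ContDiffOn ℝ 1 z (Ico 0 R) := hreg.of_le (by norm_num)
  have hderiv0 : derivWithin z (Ico 0 R) 0 = 0 :=
    pow_eq_zero_iff two_ne_zero |>.1 <| eq_zero_of_tendsto_of_intervalIntegrable_div hr.1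
      ((tendsto_deriv_nhdsGT_of_contDiffOn_Ico (hr.1.trans hr.2) hz1).pow 2) (hint r hr)
  have hIcc : Icc 0 r ⊆ Ico 0 R := Icc_subset_Ico_right hr.2
  have hcont : ContinuousOn (horoShrinkerEnergy z) (Icc 0 r) :=
    continuousOn_horoShrinkerEnergy (hreg.continuousOn.mono hIcc)
      (continuousOn_deriv_Icc_of_contDiffOn_Ico hz1 hr.2 (hinit'.trans hderiv0.symm))
      fun t ht => hpos t (hIcc ht)
  have hderiv : ∀ t ∈ Ioo 0 r, HasDerivAt (horoShrinkerEnergy z) (-(deriv z t ^ 2 / t)) t := by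
    intro t ht
    have htR : t ∈ Ioo 0 R := ⟨ht.1, ht.2.trans hr.2⟩
    have hnhds : Ioo 0 R ∈ 𝓝 t := isOpen_Ioo.mem_nhds htR
    have hz2 : ContDiffOn ℝ 2 z (Ioo 0 R) := hreg.mono Ioo_subset_Ico_self
    have hz2' : ContDiffOn ℝ 1 (deriv z) (Ioo 0 R) :=
      hz2.deriv_of_isOpen isOpen_Ioo (by norm_num)
    exact hasDerivAt_horoShrinkerEnergy
      ((hz2.differentiableOn two_ne_zero).differentiableAt hnhds)
      ((hz2'.differentiableOn one_ne_zero).differentiableAt hnhds)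
      (hpos t (Ioo_subset_Ico_self htR)) (hode t htR)
  have hE0 : horoShrinkerEnergy z 0 = 2 * (1 / z₀ + log z₀) := by
    simp [horoShrinkerEnergy, hinit, hinit']
  have hFTC :=
    intervalIntegral.integral_eq_sub_of_hasDerivAt_of_le hr.1.le hcont hderiv (hint r hr).neg
  rw [intervalIntegral.integral_neg, hE0, horoShrinkerEnergy] at hFTC
  linarith

/-- Energy identity for the profile of a spherical rotational horo-shrinker:
multiplying `z''/(1+z'²) + z'/r = 2(1-z)/z²` by `z'` and integrating from `0`
to `r` gives
`½ log(1+z'(r)²) + ∫₀^r z'(t)²/t dt = -2(1/z(r) + log z(r)) + 2(1/z₀ + log z₀)`. -/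
theorem sphericalRotational_energy_identity (R z₀ : ℝ) (hR : 0 < R)
    (hz₀ : 0 < z₀) (z : ℝ → ℝ)
    (hreg : ContDiffOn ℝ 2 z (Set.Ico 0 R))
    (hpos : ∀ r ∈ Set.Ico (0 : ℝ) R, 0 < z r)
    (hinit : z 0 = z₀) (hinit' : deriv z 0 = 0)
    (hode : ∀ r ∈ Set.Ioo (0 : ℝ) R,
      deriv (deriv z) r / (1 + (deriv z r) ^ 2) + deriv z r / r
        = 2 * (1 - z r) / (z r) ^ 2)
    (hint : ∀ r ∈ Set.Ioo (0 : ℝ) R,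
      IntervalIntegrable (fun t => (deriv z t) ^ 2 / t) MeasureTheory.volume 0 r) :
    ∀ r ∈ Set.Ioo (0 : ℝ) R,
      (1 / 2) * Real.log (1 + (deriv z r) ^ 2)
        + ∫ t in (0 : ℝ)..r, (deriv z t) ^ 2 / t
      = -2 * (1 / z r + Real.log (z r)) + 2 * (1 / z₀ + Real.log z₀) :=
  sphericalRotational_energy_identity_general R z₀ z hreg hpos hinit hinit' hode hint
end

section
/- Let z : [0, ∞) → (0, ∞) be a C² solution of z''/(1 + z'²) + z'/r = 2(1 - z)/z² with z(0) = z₀ ∈ (0, 1), z'(0) = 0, and suppose the energy identity (1/2)log(1+z'²) + ∫₀^r z'²/t dt = f(z(r)) - f(z₀) holds, where f(t) = -2(1/t + log t). Then z(r) ≥ z₀ for all r ≥ 0. -/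
/-! The left-hand side of the energy identity is nonnegative, so `f (z r) ≥ f z₀` for
`f t = -2 (1/t + log t)`. Since `f` is strictly increasing on `(0, 1]` (`f' t = 2 (1 - t) / t²`),
a value `z r < z₀ < 1` would give `f (z r) < f z₀`. -/

open Real intervalIntegral

theorem strictAntiOn_inv_add_log : StrictAntiOn (fun t : ℝ => t⁻¹ + log t) (Set.Ioc 0 1) := by
  refine strictAntiOn_of_deriv_neg (convex_Ioc 0 1) ?_ fun x hx => ?_
  · exact (continuousOn_inv₀.add continuousOn_log).mono fun x hx => hx.1.ne'
  · rw [interior_Ioc] at hx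
    have hd : HasDerivAt (fun t : ℝ => t⁻¹ + log t) (-(x ^ 2)⁻¹ + x⁻¹) x :=
      (hasDerivAt_inv hx.1.ne').add (hasDerivAt_log hx.1.ne')
    rw [hd.deriv, neg_add_lt_iff_lt_add, add_zero, inv_lt_inv₀ hx.1 (pow_pos hx.1 2)]
    nlinarith [hx.1, hx.2]

theorem half_log_one_add_sq_add_integral_nonneg (a : ℝ) (u : ℝ → ℝ) {r : ℝ} (hr : 0 ≤ r) :
    0 ≤ (1 / 2) * log (1 + a ^ 2) + ∫ t in (0 : ℝ)..r, u t ^ 2 / t := by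
  have hlog : 0 ≤ log (1 + a ^ 2) := log_nonneg (by nlinarith [sq_nonneg a])
  have hint : 0 ≤ ∫ t in (0 : ℝ)..r, u t ^ 2 / t :=
    integral_nonneg hr fun t ht => div_nonneg (sq_nonneg _) ht.1
  positivity

theorem sphericalRotational_min_height_general (z₀ : ℝ) (hz₀ : z₀ ∈ Set.Ioo (0 : ℝ) 1)
    (z : ℝ → ℝ)
    (hpos : ∀ r : ℝ, 0 ≤ r → 0 < z r)
    (hinit : z 0 = z₀)
    (henergy : ∀ r : ℝ, 0 < r →
      (1 / 2) * Real.log (1 + (deriv z r) ^ 2)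
        + ∫ t in (0 : ℝ)..r, (deriv z t) ^ 2 / t
      = (-2 * (1 / z r + Real.log (z r))) - (-2 * (1 / z₀ + Real.log z₀))) :
    ∀ r : ℝ, 0 ≤ r → z₀ ≤ z r := by
  intro r hr
  rcases hr.eq_or_lt with rfl | hr
  · exact hinit.ge
  have hf : (z r)⁻¹ + log (z r) ≤ z₀⁻¹ + log z₀ := by
    have := half_log_one_add_sq_add_integral_nonneg (deriv z r) (deriv z) hr.le
    simp only [one_div] at this henergy ⊢
    linarith [henergy r hr]
  by_contra! hlt
  exact (strictAntiOn_inv_add_log ⟨hpos r hr.le, (hlt.trans hz₀.2).le⟩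
    ⟨hz₀.1, hz₀.2.le⟩ hlt).not_ge hf

/-- For a solution of the spherical rotational profile ODE starting at height
`z₀ ∈ (0,1)` with horizontal tangent, satisfying the energy identity with
`f(t) = -2(1/t + log t)`, the height never drops below `z₀`. -/
theorem sphericalRotational_min_height (z₀ : ℝ) (hz₀ : z₀ ∈ Set.Ioo (0 : ℝ) 1)
    (z : ℝ → ℝ)
    (hreg : ContDiffOn ℝ 2 z (Set.Ici 0))
    (hpos : ∀ r : ℝ, 0 ≤ r → 0 < z r)
    (hinit : z 0 = z₀) (hinit' : deriv z 0 = 0)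
    (hode : ∀ r : ℝ, 0 < r →
      deriv (deriv z) r / (1 + (deriv z r) ^ 2) + deriv z r / r
        = 2 * (1 - z r) / (z r) ^ 2)
    (henergy : ∀ r : ℝ, 0 < r →
      (1 / 2) * Real.log (1 + (deriv z r) ^ 2)
        + ∫ t in (0 : ℝ)..r, (deriv z t) ^ 2 / t
      = (-2 * (1 / z r + Real.log (z r))) - (-2 * (1 / z₀ + Real.log z₀))) :
    ∀ r : ℝ, 0 ≤ r → z₀ ≤ z r :=
  sphericalRotational_min_height_general z₀ hz₀ z hpos hinit henergy
end

section
/- Let Σ be the surface parametrized by Ψ(s,t) = t α(s), t > 0, where α : I → S²₊ is unit-speed, and suppose that for all (s,t): t α₃(s) (2 α₃(s) ⟨α'(s) × α(s), α''(s)⟩ + (α'(s) × α(s))₃) − (α'(s) × α(s))₃ = 0. Then ⟨α'(s) × α(s), α''(s)⟩ = 0 and (α'(s) × α(s))₃ = 0 for all s ∈ I. -/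
open Real Matrix

theorem eq_zero_of_forall_pos_mul_sub_eq_zero {R : Type*} [CommRing R] [PartialOrder R]
    [IsStrictOrderedRing R] {a b : R} (h : ∀ t : R, 0 < t → t * a - b = 0) :
    a = 0 ∧ b = 0 := by
  have h₁ := h 1 one_pos
  have h₂ := h 2 two_pos
  exact ⟨by linear_combination h₂ - h₁, by linear_combination h₂ - 2 * h₁⟩

theorem hyperbolicInvariant_polynomial_identity_general
    (I : Set ℝ) (α α' α'' : ℝ → Fin 3 → ℝ)
    (hup : ∀ s ∈ I, 0 < α s 2)
    (hpoly : ∀ s ∈ I, ∀ t : ℝ, 0 < t →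
      t * α s 2 * (2 * α s 2 * (crossProduct (α' s) (α s) ⬝ᵥ α'' s)
          + crossProduct (α' s) (α s) 2)
        - crossProduct (α' s) (α s) 2 = 0) :
    ∀ s ∈ I, crossProduct (α' s) (α s) ⬝ᵥ α'' s = 0 ∧
      crossProduct (α' s) (α s) 2 = 0 := by
  intro s hs
  obtain ⟨hlead, hconst⟩ := eq_zero_of_forall_pos_mul_sub_eq_zero fun t ht => by
    simpa only [mul_assoc] using hpoly s hs t ht
  refine ⟨?_, hconst⟩
  simpa [hconst, (hup s hs).ne'] using hlead

/-- Key algebraic step in classifying hyperbolic-translation-invariant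
horo-shrinkers: if for every `s ∈ I` the polynomial identity in `t > 0`
`t α₃ (2 α₃ ⟨α'×α, α''⟩ + (α'×α)₃) − (α'×α)₃ = 0` holds, with `α₃ > 0`, then
`⟨α'×α, α''⟩ = 0` and `(α'×α)₃ = 0` on `I`. -/
theorem hyperbolicInvariant_polynomial_identity
    (I : Set ℝ) (α α' α'' : ℝ → Fin 3 → ℝ)
    (hsphere : ∀ s ∈ I, ∑ i, (α s i) ^ 2 = 1)
    (hunit : ∀ s ∈ I, ∑ i, (α' s i) ^ 2 = 1)
    (hup : ∀ s ∈ I, 0 < α s 2)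
    (hpoly : ∀ s ∈ I, ∀ t : ℝ, 0 < t →
      t * α s 2 * (2 * α s 2 * (crossProduct (α' s) (α s) ⬝ᵥ α'' s)
          + crossProduct (α' s) (α s) 2)
        - crossProduct (α' s) (α s) 2 = 0) :
    ∀ s ∈ I, crossProduct (α' s) (α s) ⬝ᵥ α'' s = 0 ∧
      crossProduct (α' s) (α s) 2 = 0 :=
  hyperbolicInvariant_polynomial_identity_general I α α' α'' hup hpoly
end
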